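/- Let A = diag(1,3,9) over ℤ/8ℤ and G = {X ∈ M₃(ℤ/8ℤ) : det X = 1, XᵀAX = A}. Then the reduction of G modulo 2 equals {E_id, E_(1 3)}, the identity permutation matrix and the transposition matrix swapping coordinates 1 and 3. -/
import Mathlib

private theorem sq4 : ∀ y : ZMod 4, y * y =
    ((ZMod.castHom (by norm_num : (2:ℕ) ∣ 4) (ZMod 2) y).val : ZMod 4) := by decide

private theorem comp48 : ∀ x : ZMod 8,
    ZMod.castHom (by norm_num : (2:ℕ) ∣ 4) (ZMod 2)
      (ZMod.castHom (by norm_num : (4:ℕ) ∣ 8) (ZMod 4) x)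
      = ZMod.castHom (by norm_num : (2:ℕ) ∣ 8) (ZMod 2) x := by decide

private theorem entry3 (Y : Matrix (Fin 3) (Fin 3) (ZMod 4)) (d : Fin 3 → ZMod 4) (j : Fin 3) :
    (Y.transpose * Matrix.diagonal d * Y) j j =
      d 0 * (Y 0 j * Y 0 j) + d 1 * (Y 1 j * Y 1 j) + d 2 * (Y 2 j * Y 2 j) := by
  simp [Matrix.mul_apply, Matrix.diagonal, Fin.sum_univ_three]
  ring

private theorem dmap4 : (Matrix.diagonal ![(1 : ZMod 8), 3, 9]).map
    (ZMod.castHom (by norm_num : (4:ℕ) ∣ 8) (ZMod 4)) =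
    Matrix.diagonal ![(1:ZMod 4),3,1] := by decide

private theorem dmap2 : (Matrix.diagonal ![(1 : ZMod 8), 3, 9]).map
    (ZMod.castHom (by norm_num : (2:ℕ) ∣ 8) (ZMod 2)) = 1 := by decide

set_option maxRecDepth 20000 in
private theorem key : ∀ M : Matrix (Fin 3) (Fin 3) (ZMod 2),
    M.transpose * M = 1 →
    (∀ j, (1:ZMod 4) * ((M 0 j).val : ZMod 4) + 3 * ((M 1 j).val : ZMod 4)
        + 1 * ((M 2 j).val : ZMod 4) = Matrix.diagonal ![(1:ZMod 4),3,1] j j) →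
    M = !![1,0,0;0,1,0;0,0,1] ∨ M = !![0,0,1;0,1,0;1,0,0] := by
  decide

private theorem e1 : (!![1,0,0;0,1,0;0,0,1] : Matrix (Fin 3) (Fin 3) (ZMod 2)) =
    Matrix.of (fun i j => if j = i then (1 : ZMod 2) else 0) := by decide

private theorem e2 : (!![0,0,1;0,1,0;1,0,0] : Matrix (Fin 3) (Fin 3) (ZMod 2)) =
    Matrix.of (fun i j => if j = Equiv.swap (0 : Fin 3) 2 i then (1 : ZMod 2) else 0) := by decide

theorem stmt_14 :
    {M : Matrix (Fin 3) (Fin 3) (ZMod 2) |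
      ∃ X : Matrix (Fin 3) (Fin 3) (ZMod 8), X.det = 1 ∧
        X.transpose * Matrix.diagonal ![(1 : ZMod 8), 3, 9] * X =
          Matrix.diagonal ![(1 : ZMod 8), 3, 9] ∧
        X.map (ZMod.castHom (by norm_num : (2:ℕ) ∣ 8) (ZMod 2)) = M} =
    {Matrix.of (fun i j => if j = i then (1 : ZMod 2) else 0),
     Matrix.of (fun i j => if j = Equiv.swap (0 : Fin 3) 2 i then (1 : ZMod 2) else 0)} := by
  ext M
  simp only [Set.mem_setOf_eq, Set.mem_insert_iff, Set.mem_singleton_iff]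
  constructor
  · rintro ⟨X, hdet, hA, rfl⟩
    have φ2 := ZMod.castHom (by norm_num : (2:ℕ) ∣ 8) (ZMod 2)
    -- mod 2 orthogonality
    have h2 := congrArg ((ZMod.castHom (by norm_num : (2:ℕ) ∣ 8) (ZMod 2)).mapMatrix) hA
    rw [map_mul, map_mul] at h2
    simp only [RingHom.mapMatrix_apply] at h2
    rw [Matrix.transpose_map, dmap2, mul_one] at h2
    -- mod 4 diagonal constraint
    have h4 := congrArg ((ZMod.castHom (by norm_num : (4:ℕ) ∣ 8) (ZMod 4)).mapMatrix) hA
    rw [map_mul, map_mul] at h4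
    simp only [RingHom.mapMatrix_apply] at h4
    rw [Matrix.transpose_map, dmap4] at h4
    have hcons : ∀ j, (1:ZMod 4) * (((X.map (ZMod.castHom (by norm_num : (2:ℕ) ∣ 8) (ZMod 2))) 0 j).val : ZMod 4)
        + 3 * (((X.map (ZMod.castHom (by norm_num : (2:ℕ) ∣ 8) (ZMod 2))) 1 j).val : ZMod 4)
        + 1 * (((X.map (ZMod.castHom (by norm_num : (2:ℕ) ∣ 8) (ZMod 2))) 2 j).val : ZMod 4) = Matrix.diagonal ![(1:ZMod 4),3,1] j j := by
      intro j
      have hj := congrFun (congrFun h4 j) j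
      rw [entry3] at hj
      simp only [Matrix.cons_val_zero, Matrix.cons_val_one, Matrix.head_cons,
        Matrix.cons_val_two, Matrix.tail_cons, Matrix.map_apply, sq4, comp48] at hj
      simpa only [Matrix.map_apply] using hj
    rcases key _ h2 hcons with h | h
    · exact Or.inl (h.trans e1)
    · exact Or.inr (h.trans e2)
  · rintro (rfl | rfl)
    · exact ⟨1, Matrix.det_one, by simp, by decide⟩
    · refine ⟨!![0,0,1;0,7,0;1,0,0], by decide, by decide, by decide⟩
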